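/- Let n and m be positive integers with m < n, let A be an n×n real symmetric positive semidefinite matrix with rank(A) = n − m, let B be an m×n real matrix with rank m, and let W be an m×m real symmetric positive definite matrix such that A_W = A + BᵀWB is symmetric positive definite. Then W^{1/2} B A_W⁻¹ Bᵀ W^{1/2} = I_m; consequently all singular values of B̃ = W^{1/2} B A_W^{-1/2} equal 1. -/

import Mathlib

open Matrix
namespace Matrix
open scoped ComplexOrder
noncomputable def PosSemidef.sqrt {n 𝕜 : Type*} [Fintype n] [RCLike 𝕜] [DecidableEq n]
    {A : Matrix n n 𝕜} (hA : PosSemidef A) : Matrix n n 𝕜 :=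
  (hA.1.eigenvectorUnitary : Matrix n n 𝕜) * diagonal (((↑) : ℝ → 𝕜) ∘ (√·) ∘ hA.1.eigenvalues) *
    (star hA.1.eigenvectorUnitary : Matrix n n 𝕜)
end Matrix

open scoped ComplexOrder in
lemma Matrix.PosSemidef.sqrt_mul_self {n 𝕜 : Type*} [Fintype n] [RCLike 𝕜] [DecidableEq n]
    {A : Matrix n n 𝕜} (hA : PosSemidef A) : hA.sqrt * hA.sqrt = A := by
  have hU : (star hA.1.eigenvectorUnitary : Matrix n n 𝕜) * (hA.1.eigenvectorUnitary : Matrix n n 𝕜) = 1 :=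
    Unitary.coe_star_mul_self _
  have hD : diagonal (((↑) : ℝ → 𝕜) ∘ (√·) ∘ hA.1.eigenvalues) *
      diagonal (((↑) : ℝ → 𝕜) ∘ (√·) ∘ hA.1.eigenvalues) =
      diagonal (RCLike.ofReal ∘ hA.1.eigenvalues) := by
    rw [diagonal_mul_diagonal]
    congr 1; funext i
    simp only [Function.comp_apply, ← RCLike.ofReal_mul]
    rw [Real.mul_self_sqrt (hA.eigenvalues_nonneg i)]
  conv_rhs => rw [hA.1.spectral_theorem, Unitary.conjStarAlgAut_apply]
  unfold PosSemidef.sqrt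
  calc _ = (hA.1.eigenvectorUnitary : Matrix n n 𝕜) * diagonal (((↑) : ℝ → 𝕜) ∘ (√·) ∘ hA.1.eigenvalues) *
      ((star hA.1.eigenvectorUnitary : Matrix n n 𝕜) * (hA.1.eigenvectorUnitary : Matrix n n 𝕜)) *
      diagonal (((↑) : ℝ → 𝕜) ∘ (√·) ∘ hA.1.eigenvalues) * (star hA.1.eigenvectorUnitary : Matrix n n 𝕜) := by
        simp only [Matrix.mul_assoc]
    _ = _ := by rw [hU, Matrix.mul_one, Matrix.mul_assoc _ (diagonal _) (diagonal _), hD]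

open scoped ComplexOrder in
lemma Matrix.PosSemidef.isHermitian_sqrt {n 𝕜 : Type*} [Fintype n] [RCLike 𝕜] [DecidableEq n]
    {A : Matrix n n 𝕜} (hA : PosSemidef A) : hA.sqrt.IsHermitian := by
  unfold PosSemidef.sqrt IsHermitian
  rw [conjTranspose_mul, conjTranspose_mul, diagonal_conjTranspose, Matrix.mul_assoc]
  congr 2
  · rw [← Matrix.star_eq_conjTranspose, star_star]
  · congr 1; funext i; simp

set_option maxHeartbeats 1000000 in
/-- with `rank A = n - m` and `A_W = A + BᵀWB` symmetric positive definite,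
`W^{1/2} B A_W⁻¹ Bᵀ W^{1/2} = I`; consequently every singular value of
`B̃ = W^{1/2} B A_W^{-1/2}` equals `1` (its squared singular values `s²` are the
eigenvalues of `B̃ B̃ᵀ`). -/
theorem split_preconditioned_offdiag_block {n m : ℕ} (hn : 0 < n) (hm : 0 < m) (hmn : m < n)
    (A : Matrix (Fin n) (Fin n) ℝ) (B : Matrix (Fin m) (Fin n) ℝ)
    (W : Matrix (Fin m) (Fin m) ℝ)
    (hA : A.PosSemidef) (hrA : A.rank = n - m) (hrB : B.rank = m)
    (hW : W.PosDef) (hAW : (A + Bᵀ * W * B).PosDef) :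
    hW.posSemidef.sqrt * (B * (A + Bᵀ * W * B)⁻¹ * Bᵀ) * hW.posSemidef.sqrt = 1 ∧
    ∀ s : ℝ, 0 ≤ s →
      (∃ x : Fin m → ℝ, x ≠ 0 ∧
        ((hW.posSemidef.sqrt * B * (hAW.posSemidef.sqrt)⁻¹) *
            (hW.posSemidef.sqrt * B * (hAW.posSemidef.sqrt)⁻¹)ᵀ) *ᵥ x = (s ^ 2) • x) →
      s = 1 := by
  set AW : Matrix (Fin n) (Fin n) ℝ := A + Bᵀ * W * B with hAWdef
  have hAWdet : IsUnit AW.det := hAW.det_pos.ne'.isUnit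
  have hWdet : IsUnit W.det := hW.det_pos.ne'.isUnit
  -- kernel of A has dimension m
  have hker : Module.finrank ℝ (LinearMap.ker A.mulVecLin) = m := by
    have h1 : A.rank + Module.finrank ℝ (LinearMap.ker A.mulVecLin) = n := by
      simpa [Matrix.rank, Module.finrank_pi] using
        LinearMap.finrank_range_add_finrank_ker A.mulVecLin
    omega
  -- the map x ↦ W *ᵥ (B *ᵥ x) restricted to ker A
  set f : (LinearMap.ker A.mulVecLin) →ₗ[ℝ] (Fin m → ℝ) :=
    (W * B).mulVecLin ∘ₗ (LinearMap.ker A.mulVecLin).subtype with hf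
  have hfinj : Function.Injective f := by
    rw [← LinearMap.ker_eq_bot, LinearMap.ker_eq_bot']
    intro x hx
    have hx' : (W * B) *ᵥ (x : Fin n → ℝ) = 0 := hx
    have hxA : A *ᵥ (x : Fin n → ℝ) = 0 := x.2
    have hWBx : W *ᵥ (B *ᵥ (x : Fin n → ℝ)) = 0 := by
      rw [mulVec_mulVec]; exact hx'
    have hAWx : AW *ᵥ (x : Fin n → ℝ) = 0 := by
      simp [hAWdef, add_mulVec, hxA, ← mulVec_mulVec, hWBx]
    have : (x : Fin n → ℝ) = 0 := by
      by_contra hne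
      have := hAW.dotProduct_mulVec_pos hne
      rw [hAWx] at this
      simp at this
    exact Subtype.ext this
  have hfsurj : Function.Surjective f :=
    (LinearMap.injective_iff_surjective_of_finrank_eq_finrank
      (by rw [hker, Module.finrank_pi, Fintype.card_fin])).mp hfinj
  -- key identity on vectors
  have key : ∀ z : Fin m → ℝ, (W * B * AW⁻¹ * Bᵀ) *ᵥ z = z := by
    intro z
    obtain ⟨x, hx⟩ := hfsurj z
    have hx' : W *ᵥ (B *ᵥ (x : Fin n → ℝ)) = z := by
      simpa [f, mulVec_mulVec] using hx
    have hxA : A *ᵥ (x : Fin n → ℝ) = 0 := x.2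
    have hAWx : AW *ᵥ (x : Fin n → ℝ) = Bᵀ *ᵥ z := by
      rw [hAWdef, add_mulVec, hxA, zero_add, Matrix.mul_assoc, ← mulVec_mulVec,
        ← mulVec_mulVec, hx']
    have hinvx : AW⁻¹ *ᵥ (Bᵀ *ᵥ z) = (x : Fin n → ℝ) := by
      rw [← hAWx, mulVec_mulVec, nonsing_inv_mul _ hAWdet, one_mulVec]
    calc (W * B * AW⁻¹ * Bᵀ) *ᵥ z = W *ᵥ (B *ᵥ (AW⁻¹ *ᵥ (Bᵀ *ᵥ z))) := by
          simp [mulVec_mulVec, Matrix.mul_assoc]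
      _ = z := by rw [hinvx, hx']
  have hmat : W * (B * AW⁻¹ * Bᵀ) = 1 := by
    ext i j
    have := key (Pi.single j 1)
    have h2 := congrFun this i
    rw [mulVec_single] at h2
    simpa [Matrix.mul_assoc, Matrix.one_apply, Pi.single_apply] using h2
  have hC : B * AW⁻¹ * Bᵀ = W⁻¹ := by
    have := congrArg (fun M => W⁻¹ * M) hmat
    simpa [← Matrix.mul_assoc, nonsing_inv_mul _ hWdet] using this
  -- sqrt facts for W
  set S := hW.posSemidef.sqrt with hS
  have hSS : S * S = W := hW.posSemidef.sqrt_mul_self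
  have hSdet : IsUnit S.det := by
    have : S.det * S.det = W.det := by rw [← det_mul, hSS]
    rcases hWdet with ⟨u, hu⟩
    exact IsUnit.of_mul_eq_one (a := S.det) (S.det * W.det⁻¹) (by
      field_simp [← hu]
      nlinarith [this, hW.det_pos, hu])
  have hpart1 : S * (B * AW⁻¹ * Bᵀ) * S = 1 := by
    rw [hC, ← hSS, Matrix.mul_inv_rev, ← Matrix.mul_assoc S S⁻¹ S⁻¹,
      Matrix.mul_nonsing_inv _ hSdet, Matrix.one_mul, nonsing_inv_mul _ hSdet]
  refine ⟨hpart1, ?_⟩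
  -- second part
  intro s hs ⟨x, hx0, hxeq⟩
  set T := hAW.posSemidef.sqrt with hT
  have hTT : T * T = AW := hAW.posSemidef.sqrt_mul_self
  have hTherm : Tᵀ = T := hAW.posSemidef.isHermitian_sqrt
  have hBB : (S * B * T⁻¹) * (S * B * T⁻¹)ᵀ = 1 := by
    have hTinv : T⁻¹ * (T⁻¹)ᵀ = AW⁻¹ := by
      rw [transpose_nonsing_inv, hTherm, ← Matrix.mul_inv_rev, hTT]
    have hSsymm : Sᵀ = S := hW.posSemidef.isHermitian_sqrt
    calc (S * B * T⁻¹) * (S * B * T⁻¹)ᵀ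
        = S * (B * (T⁻¹ * (T⁻¹)ᵀ) * Bᵀ) * Sᵀ := by
          simp only [transpose_mul, Matrix.mul_assoc]
      _ = S * (B * AW⁻¹ * Bᵀ) * S := by rw [hTinv, hSsymm, Matrix.mul_assoc]
      _ = 1 := hpart1
  rw [hBB, one_mulVec] at hxeq
  obtain ⟨i, hi⟩ := Function.ne_iff.mp hx0
  have : x i = s ^ 2 * x i := congrFun hxeq i
  have h : (s ^ 2 - 1) * x i = 0 := by linear_combination -this
  rcases mul_eq_zero.mp h with h1 | h1
  · have h2 : (s - 1) * (s + 1) = 0 := by linear_combination h1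
    rcases mul_eq_zero.mp h2 with h3 | h3
    · linarith
    · linarith
  · exact absurd h1 hi
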